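/- arXiv:1502.07820 — 2 statements merged into one kernel-verified Lean document; each statement's English description precedes it below -/
import Mathlib

section
/- Lemma 2, Eq. (21): let b be the parent of a non-root node a, with edge resistance r_{ab} and reactance x_{ab}. Then W_ε(a,b) = Σ_{c ∈ D_a} [r_{ab}² σp(c) + x_{ab}² σq(c) + 2 r_{ab} x_{ab} σpq(c)], i.e., the expected squared centered difference of voltage-magnitude deviations across an edge depends only on that edge's parameters and the injection statistics of the descendants of a. -/
open Finset
open Classical

/-- A finite rooted tree, encoded by its root and parent map: every node reaches
the root by iterating `parent`, and the root is a fixed point of `parent`.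
Each non-root node `v` is identified with the edge `(v, parent v)`, so that
edge weights are functions on non-root nodes. -/
structure DistTree (V : Type) [Fintype V] [DecidableEq V] where
  root : V
  parent : V → V
  parent_root : parent root = root
  reaches_root : ∀ v : V, ∃ n : ℕ, parent^[n] v = root

namespace DistTree

variable {V : Type} [Fintype V] [DecidableEq V]

/-- `a` is a descendant of `b` (i.e. `a ∈ D_b`): `b` lies on the path from `a`
to the root.  Every node is a descendant of itself. -/
def Desc (T : DistTree V) (a b : V) : Prop := ∃ n : ℕ, T.parent^[n] a = b

/-- `b` is the parent of the (non-root) node `a`: `(a,b)` is an edge of the tree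
and `b` lies on the path from `a` to the root. -/
def IsParent (T : DistTree V) (b a : V) : Prop := a ≠ T.root ∧ T.parent a = b

/-- `T.pathSum w a b = Σ_{e ∈ P(a) ∩ P(b)} w_e` : the sum of the edge weights `w`
over the edges common to the path from `a` to the root and the path from `b` to
the root.  An edge `(v, parent v)` (indexed by the non-root node `v`) lies on
`P(a)` iff `a` is a descendant of `v`. -/
noncomputable def pathSum (T : DistTree V) (w : V → ℝ) (a b : V) : ℝ :=
  ∑ v : V, if v ≠ T.root ∧ T.Desc a v ∧ T.Desc b v then w v else 0

end DistTree

/-- `W_ε(a,b) := Σ_{c ≠ 0} [(R(a,c)−R(b,c))² σp(c) + (X(a,c)−X(b,c))² σq(c)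
+ 2 (R(a,c)−R(b,c)) (X(a,c)−X(b,c)) σpq(c)]`: the expected squared centered
difference of voltage-magnitude deviations between `a` and `b` (LC-PF model). -/
noncomputable def Weps {V : Type} [Fintype V] [DecidableEq V]
    (T : DistTree V) (r x σp σq σpq : V → ℝ) (a b : V) : ℝ :=
  ∑ c : V, if c ≠ T.root then
      (T.pathSum r a c - T.pathSum r b c) ^ 2 * σp c
        + (T.pathSum x a c - T.pathSum x b c) ^ 2 * σq c
        + 2 * (T.pathSum r a c - T.pathSum r b c)
            * (T.pathSum x a c - T.pathSum x b c) * σpq c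
    else 0

/-- `W_θ(a,b) := Σ_{c ≠ 0} [(X(a,c)−X(b,c))² σp(c) + (R(a,c)−R(b,c))² σq(c)
− 2 (R(a,c)−R(b,c)) (X(a,c)−X(b,c)) σpq(c)]`: the expected squared centered
difference of voltage phase angles between `a` and `b` (LC-PF model). -/
noncomputable def Wtheta {V : Type} [Fintype V] [DecidableEq V]
    (T : DistTree V) (r x σp σq σpq : V → ℝ) (a b : V) : ℝ :=
  ∑ c : V, if c ≠ T.root then
      (T.pathSum x a c - T.pathSum x b c) ^ 2 * σp c
        + (T.pathSum r a c - T.pathSum r b c) ^ 2 * σq c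
        - 2 * (T.pathSum r a c - T.pathSum r b c)
            * (T.pathSum x a c - T.pathSum x b c) * σpq c
    else 0

/-- `W_{εθ}(a,b) := Σ_{c ≠ 0} [(R(a,c)−R(b,c)) (X(a,c)−X(b,c)) (σp(c) − σq(c))
+ ((X(a,c)−X(b,c))² − (R(a,c)−R(b,c))²) σpq(c)]`: the expected product of the
centered differences of voltage-magnitude deviations and phase angles between
`a` and `b` (LC-PF model). -/
noncomputable def WepsTheta {V : Type} [Fintype V] [DecidableEq V]
    (T : DistTree V) (r x σp σq σpq : V → ℝ) (a b : V) : ℝ :=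
  ∑ c : V, if c ≠ T.root then
      (T.pathSum r a c - T.pathSum r b c) * (T.pathSum x a c - T.pathSum x b c)
          * (σp c - σq c)
        + ((T.pathSum x a c - T.pathSum x b c) ^ 2
            - (T.pathSum r a c - T.pathSum r b c) ^ 2) * σpq c
    else 0


namespace DistTree

variable {V : Type} [Fintype V] [DecidableEq V]

lemma root_fixed (T : DistTree V) (n : ℕ) : T.parent^[n] T.root = T.root := by
  induction n with
  | zero => rfl
  | succ n ih => rw [Function.iterate_succ_apply', ih, T.parent_root]

lemma not_desc_parent (T : DistTree V) (a : V) (ha : a ≠ T.root) :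
    ¬ T.Desc (T.parent a) a := by
  rintro ⟨n, hn⟩
  have hcyc : T.parent^[n+1] a = a := by
    rw [Function.iterate_succ_apply, hn]
  obtain ⟨m, hm⟩ := T.reaches_root a
  have key : ∀ t, T.parent^[(n+1)*t] a = a := by
    intro t
    induction t with
    | zero => rfl
    | succ t ih => rw [Nat.mul_succ, Function.iterate_add_apply, hcyc, ih]
  have hge : m ≤ (n+1)*(m+1) := by nlinarith
  have h2 : T.parent^[(n+1)*(m+1)] a = T.root := by
    calc T.parent^[(n+1)*(m+1)] a
        = T.parent^[((n+1)*(m+1)-m)+m] a := by rw [Nat.sub_add_cancel hge]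
      _ = T.parent^[(n+1)*(m+1)-m] (T.parent^[m] a) := Function.iterate_add_apply _ _ _ _
      _ = T.root := by rw [hm, root_fixed]
  exact ha ((key (m+1)).symm.trans h2)

lemma desc_parent_iff (T : DistTree V) (a v : V) (hv : v ≠ a) :
    T.Desc a v ↔ T.Desc (T.parent a) v := by
  constructor
  · rintro ⟨n, hn⟩
    cases n with
    | zero => exact absurd hn.symm hv
    | succ n => exact ⟨n, by rwa [Function.iterate_succ_apply] at hn⟩
  · rintro ⟨n, hn⟩
    exact ⟨n+1, by rwa [Function.iterate_succ_apply]⟩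

lemma pathSum_parent_sub (T : DistTree V) (w : V → ℝ) (a c : V) (ha : a ≠ T.root) :
    T.pathSum w a c - T.pathSum w (T.parent a) c =
      if T.Desc c a then w a else 0 := by
  unfold pathSum
  rw [← Finset.sum_sub_distrib, Finset.sum_eq_single a]
  · have h1 : ¬ (a ≠ T.root ∧ T.Desc (T.parent a) a ∧ T.Desc c a) := by
      rintro ⟨_, h, _⟩; exact T.not_desc_parent a ha h
    rw [if_neg h1, sub_zero]
    by_cases hd : T.Desc c a
    · rw [if_pos ⟨ha, ⟨0, rfl⟩, hd⟩, if_pos hd]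
    · rw [if_neg (by rintro ⟨_, _, h⟩; exact hd h), if_neg hd]
  · intro v _ hv
    rw [show (T.Desc a v) = (T.Desc (T.parent a) v) from
      propext (T.desc_parent_iff a v hv), sub_self]
  · intro h; exact absurd (Finset.mem_univ a) h

end DistTree

/-- **Lemma 2, Eq. (21).** If `b` is the parent of the non-root node
`a`, with edge resistance `r_{ab}` and reactance `x_{ab}`, then
`W_ε(a,b) = Σ_{c ∈ D_a} [r_{ab}² σp(c) + x_{ab}² σq(c) + 2 r_{ab} x_{ab} σpq(c)]`. -/
theorem Weps_parent_edge {V : Type} [Fintype V] [DecidableEq V]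
    (T : DistTree V) (r x σp σq σpq : V → ℝ)
    (hr : ∀ v, v ≠ T.root → 0 < r v) (hx : ∀ v, v ≠ T.root → 0 < x v)
    (hσp : ∀ v, v ≠ T.root → 0 < σp v) (hσq : ∀ v, v ≠ T.root → 0 < σq v)
    (hσpq : ∀ v, v ≠ T.root → 0 < σpq v)
    (a b : V) (hab : T.IsParent b a) :
    Weps T r x σp σq σpq a b =
      ∑ c : V, if T.Desc c a then
          (r a) ^ 2 * σp c + (x a) ^ 2 * σq c + 2 * r a * x a * σpq c
        else 0 := by
  obtain ⟨ha, hb⟩ := hab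
  subst hb
  unfold Weps
  apply Finset.sum_congr rfl
  intro c _
  by_cases hc : c = T.root
  · subst hc
    have : ¬ T.Desc T.root a := by
      rintro ⟨n, hn⟩
      exact ha ((T.root_fixed n ▸ hn).symm)
    simp [this]
  · rw [if_pos hc, T.pathSum_parent_sub r a c ha, T.pathSum_parent_sub x a c ha]
    by_cases hd : T.Desc c a
    · simp [hd]
    · simp [hd]
end

section
/- Lemma 3, Case 2: let a, b, c be distinct non-root nodes such that a and c are both descendants of b and b lies on the unique path in the tree connecting a and c. Then W_ε(a,b) < W_ε(a,c). -/
open Finset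
open Classical

namespace DistTree

variable {V : Type} [Fintype V] [DecidableEq V]

lemma desc_refl (T : DistTree V) (a : V) : T.Desc a a := ⟨0, rfl⟩

lemma desc_trans (T : DistTree V) {a b v : V} (h1 : T.Desc a b) (h2 : T.Desc b v) :
    T.Desc a v := by
  obtain ⟨m, hm⟩ := h1; obtain ⟨n, hn⟩ := h2
  exact ⟨n + m, by rw [Function.iterate_add_apply, hm, hn]⟩

lemma iterate_root (T : DistTree V) (k : ℕ) : T.parent^[k] T.root = T.root :=
  Function.iterate_fixed T.parent_root k

lemma desc_antisymm (T : DistTree V) {a b : V} (h1 : T.Desc a b) (h2 : T.Desc b a) :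
    a = b := by
  obtain ⟨m, hm⟩ := h1
  obtain ⟨n, hn⟩ := h2
  rcases Nat.eq_zero_or_pos (n + m) with h0 | hpos
  · have hm0 : m = 0 := by omega
    simpa [hm0] using hm
  · have hper : T.parent^[n + m] a = a := by
      rw [Function.iterate_add_apply, hm, hn]
    obtain ⟨N, hN⟩ := T.reaches_root a
    have hmul : ∀ t, T.parent^[t * (n + m)] a = a := by
      intro t; induction t with
      | zero => simp
      | succ t ih => rw [Nat.succ_mul, Function.iterate_add_apply, hper, ih]
    have haroot : a = T.root := by
      have h := hmul N
      rw [show N * (n + m) = (N * (n + m) - N) + N by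
            have := Nat.le_mul_of_pos_right N hpos; omega,
        Function.iterate_add_apply, hN, T.iterate_root] at h
      exact h.symm
    have hbroot : b = T.root := by rw [← hm, haroot, T.iterate_root]
    rw [haroot, hbroot]

lemma desc_total (T : DistTree V) {d v1 v2 : V} (h1 : T.Desc d v1) (h2 : T.Desc d v2) :
    T.Desc v1 v2 ∨ T.Desc v2 v1 := by
  obtain ⟨m, hm⟩ := h1; obtain ⟨n, hn⟩ := h2
  rcases le_total m n with h | h
  · exact Or.inl ⟨n - m, by
      rw [← hm, ← Function.iterate_add_apply, Nat.sub_add_cancel h, hn]⟩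
  · exact Or.inr ⟨m - n, by
      rw [← hn, ← Function.iterate_add_apply, Nat.sub_add_cancel h, hm]⟩

end DistTree

/-- Sum of the weights `w` over the edges that lie on `P(a)` and `P(d)` but
not on `P(b)`. -/
noncomputable def diffSum {V : Type} [Fintype V] [DecidableEq V]
    (T : DistTree V) (w : V → ℝ) (a b d : V) : ℝ :=
  ∑ v : V, if v ≠ T.root ∧ T.Desc a v ∧ T.Desc d v ∧ ¬ T.Desc b v then w v else 0

lemma pathSum_split {V : Type} [Fintype V] [DecidableEq V]
    (T : DistTree V) (w : V → ℝ) {a b : V} (hab : T.Desc a b) (d : V) :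
    T.pathSum w a d = T.pathSum w b d + diffSum T w a b d := by
  unfold DistTree.pathSum diffSum
  rw [← Finset.sum_add_distrib]
  refine Finset.sum_congr rfl fun v _ => ?_
  have himp : T.Desc b v → T.Desc a v := fun h => T.desc_trans hab h
  by_cases h1 : v = T.root <;> by_cases h2 : T.Desc a v <;>
    by_cases h3 : T.Desc d v <;> by_cases h4 : T.Desc b v <;> simp_all

lemma diffSum_nonneg {V : Type} [Fintype V] [DecidableEq V]
    (T : DistTree V) {w : V → ℝ} (hw : ∀ v, v ≠ T.root → 0 < w v) (a b d : V) :
    0 ≤ diffSum T w a b d := by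
  refine Finset.sum_nonneg fun v _ => ?_
  split_ifs with h
  · exact (hw v h.1).le
  · exact le_rfl

lemma diffSum_eq_zero {V : Type} [Fintype V] [DecidableEq V]
    (T : DistTree V) (w : V → ℝ) {a b d : V}
    (h : ∀ v, ¬(v ≠ T.root ∧ T.Desc a v ∧ T.Desc d v ∧ ¬ T.Desc b v)) :
    diffSum T w a b d = 0 :=
  Finset.sum_eq_zero fun v _ => if_neg (h v)

/-- **Lemma 3, Case 2.** If `a`, `b`, `c` are distinct non-root
nodes such that `a` and `c` are both descendants of `b` and `b` lies on the
unique path connecting `a` and `c` (equivalently, every common ancestor of `a`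
and `c` is an ancestor of `b`), then `W_ε(a,b) < W_ε(a,c)`. -/
theorem Weps_case2 {V : Type} [Fintype V] [DecidableEq V]
    (T : DistTree V) (r x σp σq σpq : V → ℝ)
    (hr : ∀ v, v ≠ T.root → 0 < r v) (hx : ∀ v, v ≠ T.root → 0 < x v)
    (hσp : ∀ v, v ≠ T.root → 0 < σp v) (hσq : ∀ v, v ≠ T.root → 0 < σq v)
    (hσpq : ∀ v, v ≠ T.root → 0 < σpq v)
    (a b c : V) (ha : a ≠ T.root) (hb : b ≠ T.root) (hc : c ≠ T.root)
    (hab : a ≠ b) (hbc : b ≠ c) (hac : a ≠ c)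
    (hdab : T.Desc a b) (hdcb : T.Desc c b)
    (hpath : ∀ v : V, T.Desc a v → T.Desc c v → T.Desc b v) :
    Weps T r x σp σq σpq a b < Weps T r x σp σq σpq a c := by
  classical
  have hA : ∀ (w : V → ℝ) d, T.pathSum w a d - T.pathSum w b d = diffSum T w a b d := by
    intro w d; rw [pathSum_split T w hdab d]; ring
  have hC : ∀ (w : V → ℝ) d, T.pathSum w c d - T.pathSum w b d = diffSum T w c b d := by
    intro w d; rw [pathSum_split T w hdcb d]; ring
  have hAC : ∀ (w : V → ℝ) d,
      T.pathSum w a d - T.pathSum w c d = diffSum T w a b d - diffSum T w c b d := by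
    intro w d; rw [← hA, ← hC]; ring
  -- disjointness: for each d, one of the two "extra" paths is empty
  have hdisj : ∀ d : V,
      (∀ v, ¬(v ≠ T.root ∧ T.Desc a v ∧ T.Desc d v ∧ ¬ T.Desc b v)) ∨
      (∀ v, ¬(v ≠ T.root ∧ T.Desc c v ∧ T.Desc d v ∧ ¬ T.Desc b v)) := by
    intro d
    by_contra hcon
    push_neg at hcon
    obtain ⟨⟨v1, _, h1a, h1d, h1b⟩, ⟨v2, _, h2c, h2d, h2b⟩⟩ := hcon
    rcases T.desc_total h1d h2d with h | h
    · exact h2b (hpath v2 (T.desc_trans h1a h) h2c)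
    · exact h1b (hpath v1 h1a (T.desc_trans h2c h))
  have hSAc : ∀ v, ¬(v ≠ T.root ∧ T.Desc a v ∧ T.Desc c v ∧ ¬ T.Desc b v) := by
    rintro v ⟨_, hva, hvc, hvb⟩; exact hvb (hpath v hva hvc)
  have hnbc : ¬ T.Desc b c := fun h => hbc (T.desc_antisymm h hdcb)
  have hCc_pos : ∀ (w : V → ℝ), (∀ v, v ≠ T.root → 0 < w v) → 0 < diffSum T w c b c := by
    intro w hw
    refine Finset.sum_pos' (fun i _ => ?_) ⟨c, Finset.mem_univ c, ?_⟩
    · split_ifs with h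
      · exact (hw i h.1).le
      · exact le_rfl
    · rw [if_pos ⟨hc, T.desc_refl c, T.desc_refl c, hnbc⟩]
      exact hw c hc
  unfold Weps
  apply Finset.sum_lt_sum
  · intro d _
    split_ifs with hd
    · rw [hA r d, hA x d, hAC r d, hAC x d]
      rcases hdisj d with hSA | hSC
      · rw [diffSum_eq_zero T r hSA, diffSum_eq_zero T x hSA]
        have hCr := diffSum_nonneg T hr c b d
        have hCx := diffSum_nonneg T hx c b d
        have h1 : 0 ≤ (diffSum T r c b d) ^ 2 * σp d :=
          mul_nonneg (sq_nonneg _) (hσp d hd).le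
        have h2 : 0 ≤ (diffSum T x c b d) ^ 2 * σq d :=
          mul_nonneg (sq_nonneg _) (hσq d hd).le
        have h3 : 0 ≤ 2 * diffSum T r c b d * diffSum T x c b d * σpq d :=
          mul_nonneg (mul_nonneg (mul_nonneg (by norm_num) hCr) hCx) (hσpq d hd).le
        nlinarith [h1, h2, h3]
      · rw [diffSum_eq_zero T r hSC, diffSum_eq_zero T x hSC]
        exact le_of_eq (by ring)
    · exact le_rfl
  · refine ⟨c, Finset.mem_univ c, ?_⟩
    rw [if_pos hc, if_pos hc, hA r c, hA x c, hAC r c, hAC x c,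
      diffSum_eq_zero T r hSAc, diffSum_eq_zero T x hSAc]
    have hCr := hCc_pos r hr
    have hCx := hCc_pos x hx
    have h1 : 0 < (diffSum T r c b c) ^ 2 * σp c :=
      mul_pos (pow_pos hCr 2) (hσp c hc)
    have h2 : 0 < (diffSum T x c b c) ^ 2 * σq c :=
      mul_pos (pow_pos hCx 2) (hσq c hc)
    have h3 : 0 < 2 * diffSum T r c b c * diffSum T x c b c * σpq c :=
      mul_pos (mul_pos (mul_pos (by norm_num) hCr) hCx) (hσpq c hc)
    nlinarith [h1, h2, h3]
end
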